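/- arXiv:2104.03073 — 2 statements merged into one kernel-verified Lean document; each statement's English description precedes it below -/
import Mathlib

section
/- Suppose ρ₁ = (1 − ρ₂)²/4 so that Δ = 0, and set ū = (1 − ρ₂)/2. Let y₁(0) ≠ 0 and u(0) ∈ ℂ. On a neighborhood of t = 0 where 1 − y₁(0)t ≠ 0 and 1 + (u(0) − ū)·log(1 − y₁(0)t) ≠ 0, define u(t) = ( u(0) + ū·(u(0) − ū)·log(1 − y₁(0)t) ) / ( 1 + (u(0) − ū)·log(1 − y₁(0)t) ). Then u'(t) = y₁(0)·(1 − y₁(0)t)⁻¹·(u(t) − ū)² on this neighborhood, and u(0) equals the given initial value. -/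
/-- With `c = u₀ - a`, the function is `a + c / (1 + c f)`, so it solves `v' = -f' (v - a)²`. -/
theorem HasDerivAt.riccati_double_root {𝕜 : Type*} [NontriviallyNormedField 𝕜]
    {f : 𝕜 → 𝕜} {f' t : 𝕜} (a u₀ : 𝕜) (hf : HasDerivAt f f' t)
    (hd : 1 + (u₀ - a) * f t ≠ 0) :
    HasDerivAt (fun x => (u₀ + a * (u₀ - a) * f x) / (1 + (u₀ - a) * f x))
      (-f' * ((u₀ + a * (u₀ - a) * f t) / (1 + (u₀ - a) * f t) - a) ^ 2) t := by
  refine (((hf.const_mul (a * (u₀ - a))).const_add u₀).fun_div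
    ((hf.const_mul (u₀ - a)).const_add 1) hd).congr_deriv ?_
  field_simp
  ring

theorem stmt_5_general
    (ubar : ℂ)
    (y₁0 u0 : ℂ)
    (u : ℂ → ℂ)
    (hu : ∀ t : ℂ, u t =
      (u0 + ubar * (u0 - ubar) * Complex.log (1 - y₁0 * t)) /
      (1 + (u0 - ubar) * Complex.log (1 - y₁0 * t))) :
    (∀ t : ℂ, (1 - y₁0 * t) ∈ Complex.slitPlane →
        (1 + (u0 - ubar) * Complex.log (1 - y₁0 * t)) ≠ 0 →
        HasDerivAt u (y₁0 * (1 - y₁0 * t)⁻¹ * (u t - ubar) ^ 2) t) ∧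
    u 0 = u0 := by
  refine ⟨fun t hs hd => ?_, by simp [hu 0]⟩
  have hlog : HasDerivAt (fun x => Complex.log (1 - y₁0 * x)) (-y₁0 / (1 - y₁0 * t)) t := by
    simpa using (((hasDerivAt_id t).const_mul y₁0).const_sub 1).clog hs
  rw [hu t, funext hu]
  exact (hlog.riccati_double_root ubar u0 hd).congr_deriv (by ring)

theorem stmt_5 (ρ₁ ρ₂ : ℂ) (hρ : ρ₁ = (1 - ρ₂) ^ 2 / 4)
    (ubar : ℂ) (hubar : ubar = (1 - ρ₂) / 2)
    (y₁0 u0 : ℂ) (hy : y₁0 ≠ 0)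
    (u : ℂ → ℂ)
    (hu : ∀ t : ℂ, u t =
      (u0 + ubar * (u0 - ubar) * Complex.log (1 - y₁0 * t)) /
      (1 + (u0 - ubar) * Complex.log (1 - y₁0 * t))) :
    (∀ t : ℂ, (1 - y₁0 * t) ∈ Complex.slitPlane →
        (1 + (u0 - ubar) * Complex.log (1 - y₁0 * t)) ≠ 0 →
        HasDerivAt u (y₁0 * (1 - y₁0 * t)⁻¹ * (u t - ubar) ^ 2) t) ∧
    u 0 = u0 :=
  stmt_5_general ubar y₁0 u0 u hu
end

section
/- Let aₙₘ, bₙₘ (n,m = 1,2) be such that the 2×2 matrices a and b are mutually inverse, and let ρ₁, ρ₂ be constants. Suppose x₁, x₂ : I → ℂ are differentiable, and define y₁ = a₁₁x₁ + a₁₂x₂, y₂ = a₂₁x₁ + a₂₂x₂. If y₁' = y₁² and y₂' = ρ₁y₁² + ρ₂y₁y₂ + y₂², then x₁, x₂ satisfy xₙ' = cₙ₁x₁² + cₙ₂x₁x₂ + cₙ₃x₂² (n = 1,2), where cₙ₁ = bₙ₁a₁₁² + bₙ₂(ρ₁a₁₁² + (ρ₂a₁₁ + a₂₁)a₂₁),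 cₙ₂ = 2bₙ₁a₁₁a₁₂ + bₙ₂(2ρ₁a₁₁a₁₂ + ρ₂(a₁₁a₂₂ + a₁₂a₂₁) + 2a₂₁a₂₂), and cₙ₃ = bₙ₁a₁₂² + bₙ₂(ρ₁a₁₂² + (ρ₂a₁₂ + a₂₂)a₂₂). -/
/-!
Since `b = a⁻¹`, each `xₙ = bₙ₁ y₁ + bₙ₂ y₂` is a fixed linear combination of `y₁, y₂`, so its
derivative is the same combination of the right-hand sides of the canonical system. Substituting
`y = a x` there turns that quadratic form in `y` into one in `x`, whose coefficients are the `cₙₖ`.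
-/

theorem canonical_quadratic_linear_subst {R : Type*} [CommRing R]
    (ρ₁ ρ₂ a₁₁ a₁₂ a₂₁ a₂₂ p q X₁ X₂ : R) :
    p * (a₁₁ * X₁ + a₁₂ * X₂) ^ 2 + q * (ρ₁ * (a₁₁ * X₁ + a₁₂ * X₂) ^ 2
        + ρ₂ * (a₁₁ * X₁ + a₁₂ * X₂) * (a₂₁ * X₁ + a₂₂ * X₂) + (a₂₁ * X₁ + a₂₂ * X₂) ^ 2) =
      (p * a₁₁ ^ 2 + q * (ρ₁ * a₁₁ ^ 2 + (ρ₂ * a₁₁ + a₂₁) * a₂₁)) * X₁ ^ 2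
      + (2 * p * a₁₁ * a₁₂
          + q * (2 * ρ₁ * a₁₁ * a₁₂ + ρ₂ * (a₁₁ * a₂₂ + a₁₂ * a₂₁) + 2 * a₂₁ * a₂₂)) * X₁ * X₂
      + (p * a₁₂ ^ 2 + q * (ρ₁ * a₁₂ ^ 2 + (ρ₂ * a₁₂ + a₂₂) * a₂₂)) * X₂ ^ 2 := by
  ring

section LinearChange

variable {𝕜 𝔸 : Type*} [NontriviallyNormedField 𝕜] [NormedCommRing 𝔸] [NormedAlgebra 𝕜 𝔸]

theorem hasDerivAt_linear_change {x₁ x₂ y₁ y₂ : 𝕜 → 𝔸} {a₁₁ a₁₂ a₂₁ a₂₂ u v : 𝔸} {t : 𝕜}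
    (hy₁ : ∀ s, y₁ s = a₁₁ * x₁ s + a₁₂ * x₂ s) (hy₂ : ∀ s, y₂ s = a₂₁ * x₁ s + a₂₂ * x₂ s)
    (hdy₁ : HasDerivAt y₁ u t) (hdy₂ : HasDerivAt y₂ v t) (p q : 𝔸) :
    HasDerivAt (fun s => (p * a₁₁ + q * a₂₁) * x₁ s + (p * a₁₂ + q * a₂₂) * x₂ s)
      (p * u + q * v) t := by
  have hcomb : (fun s => p * y₁ s + q * y₂ s) =
      fun s => (p * a₁₁ + q * a₂₁) * x₁ s + (p * a₁₂ + q * a₂₂) * x₂ s := by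
    funext s
    rw [hy₁, hy₂]
    ring
  exact hcomb ▸ (hdy₁.const_mul p).add (hdy₂.const_mul q)

theorem hasDerivAt_linear_change_of_canonical {x₁ x₂ y₁ y₂ : 𝕜 → 𝔸}
    {ρ₁ ρ₂ a₁₁ a₁₂ a₂₁ a₂₂ : 𝔸} {t : 𝕜} (hy₁ : ∀ s, y₁ s = a₁₁ * x₁ s + a₁₂ * x₂ s)
    (hy₂ : ∀ s, y₂ s = a₂₁ * x₁ s + a₂₂ * x₂ s) (hdy₁ : HasDerivAt y₁ (y₁ t ^ 2) t)
    (hdy₂ : HasDerivAt y₂ (ρ₁ * y₁ t ^ 2 + ρ₂ * y₁ t * y₂ t + y₂ t ^ 2) t) (p q : 𝔸) :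
    HasDerivAt (fun s => (p * a₁₁ + q * a₂₁) * x₁ s + (p * a₁₂ + q * a₂₂) * x₂ s)
      ((p * a₁₁ ^ 2 + q * (ρ₁ * a₁₁ ^ 2 + (ρ₂ * a₁₁ + a₂₁) * a₂₁)) * x₁ t ^ 2
        + (2 * p * a₁₁ * a₁₂
            + q * (2 * ρ₁ * a₁₁ * a₁₂ + ρ₂ * (a₁₁ * a₂₂ + a₁₂ * a₂₁) + 2 * a₂₁ * a₂₂))
          * x₁ t * x₂ t
        + (p * a₁₂ ^ 2 + q * (ρ₁ * a₁₂ ^ 2 + (ρ₂ * a₁₂ + a₂₂) * a₂₂)) * x₂ t ^ 2) t := by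
  have h := hasDerivAt_linear_change hy₁ hy₂ hdy₁ hdy₂ p q
  rwa [hy₁ t, hy₂ t, canonical_quadratic_linear_subst] at h

end LinearChange

theorem stmt_7_general (I : Set ℝ) (ρ₁ ρ₂ : ℂ)
    (a₁₁ a₁₂ a₂₁ a₂₂ b₁₁ b₁₂ b₂₁ b₂₂ : ℂ)
    (hinv1 : b₁₁ * a₁₁ + b₁₂ * a₂₁ = 1) (hinv2 : b₁₁ * a₁₂ + b₁₂ * a₂₂ = 0)
    (hinv3 : b₂₁ * a₁₁ + b₂₂ * a₂₁ = 0) (hinv4 : b₂₁ * a₁₂ + b₂₂ * a₂₂ = 1)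
    (x₁ x₂ y₁ y₂ : ℝ → ℂ)
    (hy₁ : ∀ t, y₁ t = a₁₁ * x₁ t + a₁₂ * x₂ t)
    (hy₂ : ∀ t, y₂ t = a₂₁ * x₁ t + a₂₂ * x₂ t)
    (hdy₁ : ∀ t ∈ I, HasDerivAt y₁ ((y₁ t) ^ 2) t)
    (hdy₂ : ∀ t ∈ I, HasDerivAt y₂
      (ρ₁ * (y₁ t) ^ 2 + ρ₂ * y₁ t * y₂ t + (y₂ t) ^ 2) t)
    (c₁₁ c₁₂ c₁₃ c₂₁ c₂₂ c₂₃ : ℂ)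
    (hc₁₁ : c₁₁ = b₁₁ * a₁₁ ^ 2 + b₁₂ * (ρ₁ * a₁₁ ^ 2 + (ρ₂ * a₁₁ + a₂₁) * a₂₁))
    (hc₁₂ : c₁₂ = 2 * b₁₁ * a₁₁ * a₁₂ +
      b₁₂ * (2 * ρ₁ * a₁₁ * a₁₂ + ρ₂ * (a₁₁ * a₂₂ + a₁₂ * a₂₁) + 2 * a₂₁ * a₂₂))
    (hc₁₃ : c₁₃ = b₁₁ * a₁₂ ^ 2 + b₁₂ * (ρ₁ * a₁₂ ^ 2 + (ρ₂ * a₁₂ + a₂₂) * a₂₂))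
    (hc₂₁ : c₂₁ = b₂₁ * a₁₁ ^ 2 + b₂₂ * (ρ₁ * a₁₁ ^ 2 + (ρ₂ * a₁₁ + a₂₁) * a₂₁))
    (hc₂₂ : c₂₂ = 2 * b₂₁ * a₁₁ * a₁₂ +
      b₂₂ * (2 * ρ₁ * a₁₁ * a₁₂ + ρ₂ * (a₁₁ * a₂₂ + a₁₂ * a₂₁) + 2 * a₂₁ * a₂₂))
    (hc₂₃ : c₂₃ = b₂₁ * a₁₂ ^ 2 + b₂₂ * (ρ₁ * a₁₂ ^ 2 + (ρ₂ * a₁₂ + a₂₂) * a₂₂)) :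
    ∀ t ∈ I,
      HasDerivAt x₁ (c₁₁ * (x₁ t) ^ 2 + c₁₂ * x₁ t * x₂ t + c₁₃ * (x₂ t) ^ 2) t ∧
      HasDerivAt x₂ (c₂₁ * (x₁ t) ^ 2 + c₂₂ * x₁ t * x₂ t + c₂₃ * (x₂ t) ^ 2) t := by
  intro t ht
  have hx := hasDerivAt_linear_change_of_canonical hy₁ hy₂ (hdy₁ t ht) (hdy₂ t ht)
  subst hc₁₁ hc₁₂ hc₁₃ hc₂₁ hc₂₂ hc₂₃
  constructor
  · simpa only [hinv1, hinv2, one_mul, zero_mul, add_zero] using hx b₁₁ b₁₂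
  · simpa only [hinv3, hinv4, one_mul, zero_mul, zero_add] using hx b₂₁ b₂₂

theorem stmt_7 (I : Set ℝ) (ρ₁ ρ₂ : ℂ)
    (a₁₁ a₁₂ a₂₁ a₂₂ b₁₁ b₁₂ b₂₁ b₂₂ : ℂ)
    (hinv1 : b₁₁ * a₁₁ + b₁₂ * a₂₁ = 1) (hinv2 : b₁₁ * a₁₂ + b₁₂ * a₂₂ = 0)
    (hinv3 : b₂₁ * a₁₁ + b₂₂ * a₂₁ = 0) (hinv4 : b₂₁ * a₁₂ + b₂₂ * a₂₂ = 1)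
    (x₁ x₂ y₁ y₂ : ℝ → ℂ)
    (hy₁ : ∀ t, y₁ t = a₁₁ * x₁ t + a₁₂ * x₂ t)
    (hy₂ : ∀ t, y₂ t = a₂₁ * x₁ t + a₂₂ * x₂ t)
    (hdy₁ : ∀ t ∈ I, HasDerivAt y₁ ((y₁ t) ^ 2) t)
    (hdy₂ : ∀ t ∈ I, HasDerivAt y₂
      (ρ₁ * (y₁ t) ^ 2 + ρ₂ * y₁ t * y₂ t + (y₂ t) ^ 2) t)
    (hdx₁ : ∀ t ∈ I, DifferentiableAt ℝ x₁ t)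
    (hdx₂ : ∀ t ∈ I, DifferentiableAt ℝ x₂ t)
    (c₁₁ c₁₂ c₁₃ c₂₁ c₂₂ c₂₃ : ℂ)
    (hc₁₁ : c₁₁ = b₁₁ * a₁₁ ^ 2 + b₁₂ * (ρ₁ * a₁₁ ^ 2 + (ρ₂ * a₁₁ + a₂₁) * a₂₁))
    (hc₁₂ : c₁₂ = 2 * b₁₁ * a₁₁ * a₁₂ +
      b₁₂ * (2 * ρ₁ * a₁₁ * a₁₂ + ρ₂ * (a₁₁ * a₂₂ + a₁₂ * a₂₁) + 2 * a₂₁ * a₂₂))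
    (hc₁₃ : c₁₃ = b₁₁ * a₁₂ ^ 2 + b₁₂ * (ρ₁ * a₁₂ ^ 2 + (ρ₂ * a₁₂ + a₂₂) * a₂₂))
    (hc₂₁ : c₂₁ = b₂₁ * a₁₁ ^ 2 + b₂₂ * (ρ₁ * a₁₁ ^ 2 + (ρ₂ * a₁₁ + a₂₁) * a₂₁))
    (hc₂₂ : c₂₂ = 2 * b₂₁ * a₁₁ * a₁₂ +
      b₂₂ * (2 * ρ₁ * a₁₁ * a₁₂ + ρ₂ * (a₁₁ * a₂₂ + a₁₂ * a₂₁) + 2 * a₂₁ * a₂₂))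
    (hc₂₃ : c₂₃ = b₂₁ * a₁₂ ^ 2 + b₂₂ * (ρ₁ * a₁₂ ^ 2 + (ρ₂ * a₁₂ + a₂₂) * a₂₂)) :
    ∀ t ∈ I,
      HasDerivAt x₁ (c₁₁ * (x₁ t) ^ 2 + c₁₂ * x₁ t * x₂ t + c₁₃ * (x₂ t) ^ 2) t ∧
      HasDerivAt x₂ (c₂₁ * (x₁ t) ^ 2 + c₂₂ * x₁ t * x₂ t + c₂₃ * (x₂ t) ^ 2) t :=
  stmt_7_general I ρ₁ ρ₂ a₁₁ a₁₂ a₂₁ a₂₂ b₁₁ b₁₂ b₂₁ b₂₂ hinv1 hinv2 hinv3 hinv4 x₁ x₂ y₁ y₂ hy₁ hy₂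
    hdy₁ hdy₂ c₁₁ c₁₂ c₁₃ c₂₁ c₂₂ c₂₃ hc₁₁ hc₁₂ hc₁₃ hc₂₁ hc₂₂ hc₂₃
end
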